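/- Let n ≥ 1, let E be a real inner product space, and let A be an n×n doubly stochastic matrix that is σ-contractive on mean-zero families with σ ≥ 0. Let s, m, m⁺ : Fin n → E and define s⁺ i := (A·s) i + m⁺ i − m i. Write ŝ := (1/n) ∑_i s i and ŝ⁺ := (1/n) ∑_i s⁺ i. Then √(∑_i ‖s⁺ i − ŝ⁺‖²) ≤ σ · √(∑_i ‖s i − ŝ‖²) + √(∑_i ‖m⁺ i − m i‖²). (One-step contraction of the tracking error towards the network average, the key recursion in the paper's summed tracking-error bound.) -/

import Mathlib

/-!
Subtracting the network average commutes with the row-stochastic action of `A`, and column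
stochasticity makes `A` preserve the average. Hence the deviation `s⁺ - ŝ⁺` splits as
`A·(s - ŝ) + (d - d̂)` with `d = m⁺ - m`. The first summand is `A` applied to a mean-zero family,
so it is contracted by `σ`; removing its mean from `d` does not increase the `ℓ²` norm, so Minkowski's inequality
finishes the proof.
-/

open Finset

section BlockMean

variable {ι M : Type*} [Fintype ι] [AddCommGroup M] [Module ℝ M]

noncomputable def blockMean (v : ι → M) : M :=
  (Fintype.card ι : ℝ)⁻¹ • ∑ i, v i

theorem blockMean_fin {n : ℕ} (v : Fin n → M) : blockMean v = (n : ℝ)⁻¹ • ∑ i, v i := by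
  rw [blockMean, Fintype.card_fin]

theorem card_smul_blockMean (v : ι → M) : (Fintype.card ι : ℝ) • blockMean v = ∑ i, v i := by
  rcases isEmpty_or_nonempty ι with hι | hι
  · simp
  · rw [blockMean, smul_smul, mul_inv_cancel₀ (by positivity), one_smul]

theorem blockMean_add (v w : ι → M) :
    blockMean (fun i => v i + w i) = blockMean v + blockMean w := by
  simp only [blockMean, sum_add_distrib, smul_add]

theorem sum_sub_blockMean (v : ι → M) : ∑ i, (v i - blockMean v) = 0 := by
  rw [sum_sub_distrib, sum_const, card_univ, ← Nat.cast_smul_eq_nsmul ℝ, card_smul_blockMean,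
    sub_self]

end BlockMean

section BlockMul

variable {ι M : Type*} [Fintype ι] [AddCommGroup M] [Module ℝ M]

def blockMul (A : ι → ι → ℝ) (v : ι → M) (i : ι) : M :=
  ∑ j, A i j • v j

theorem blockMul_sub_const {A : ι → ι → ℝ} (hrow : ∀ i, ∑ j, A i j = 1) (v : ι → M) (c : M)
    (i : ι) : blockMul A (fun j => v j - c) i = blockMul A v i - c := by
  simp only [blockMul, smul_sub, sum_sub_distrib, ← sum_smul, hrow, one_smul]

theorem sum_blockMul {A : ι → ι → ℝ} (hcol : ∀ j, ∑ i, A i j = 1) (v : ι → M) :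
    ∑ i, blockMul A v i = ∑ j, v j := by
  simp only [blockMul]
  rw [sum_comm]
  simp only [← sum_smul, hcol, one_smul]

theorem blockMean_blockMul {A : ι → ι → ℝ} (hcol : ∀ j, ∑ i, A i j = 1) (v : ι → M) :
    blockMean (blockMul A v) = blockMean v := by
  rw [blockMean, sum_blockMul hcol, blockMean]

end BlockMul

section Norms

variable {ι : Type*} [Fintype ι]

theorem sqrt_sum_norm_add_sq_le {E : Type*} [SeminormedAddCommGroup E] (f g : ι → E) :
    √(∑ i, ‖f i + g i‖ ^ 2) ≤ √(∑ i, ‖f i‖ ^ 2) + √(∑ i, ‖g i‖ ^ 2) := by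
  simpa only [PiLp.norm_eq_of_L2, WithLp.ofLp_add, Pi.add_apply] using
    norm_add_le (WithLp.toLp 2 f : PiLp 2 fun _ : ι => E) (WithLp.toLp 2 g)

variable {E : Type*} [NormedAddCommGroup E] [InnerProductSpace ℝ E]

theorem sum_norm_sub_blockMean_sq (v : ι → E) :
    ∑ i, ‖v i - blockMean v‖ ^ 2 =
      ∑ i, ‖v i‖ ^ 2 - Fintype.card ι * ‖blockMean v‖ ^ 2 := by
  have hinner : ∑ i, inner ℝ (v i) (blockMean v) = Fintype.card ι * ‖blockMean v‖ ^ 2 := by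
    rw [← sum_inner, ← card_smul_blockMean, real_inner_smul_left, real_inner_self_eq_norm_sq]
  simp only [norm_sub_sq_real, sum_add_distrib, sum_sub_distrib, ← mul_sum, hinner, sum_const,
    card_univ, nsmul_eq_mul]
  ring

theorem sum_norm_sub_blockMean_sq_le (v : ι → E) :
    ∑ i, ‖v i - blockMean v‖ ^ 2 ≤ ∑ i, ‖v i‖ ^ 2 := by
  rw [sum_norm_sub_blockMean_sq]
  linarith [show 0 ≤ (Fintype.card ι : ℝ) * ‖blockMean v‖ ^ 2 by positivity]

end Norms

theorem tracking_error_one_step_contraction_general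
    {E : Type*} [NormedAddCommGroup E] [InnerProductSpace ℝ E]
    (n : ℕ)
    (A : Fin n → Fin n → ℝ)
    (hArow : ∀ i, ∑ j, A i j = 1)
    (hAcol : ∀ j, ∑ i, A i j = 1)
    (σ : ℝ)
    (hcontr : ∀ v : Fin n → E, (∑ i, v i) = 0 →
      Real.sqrt (∑ i, ‖∑ j, A i j • v j‖ ^ 2) ≤ σ * Real.sqrt (∑ i, ‖v i‖ ^ 2))
    (s m mplus splus : Fin n → E)
    (hsplus : ∀ i, splus i = (∑ j, A i j • s j) + mplus i - m i)
    (shat shatp : E)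
    (hshat : shat = (n : ℝ)⁻¹ • ∑ i, s i)
    (hshatp : shatp = (n : ℝ)⁻¹ • ∑ i, splus i) :
    Real.sqrt (∑ i, ‖splus i - shatp‖ ^ 2) ≤
      σ * Real.sqrt (∑ i, ‖s i - shat‖ ^ 2)
        + Real.sqrt (∑ i, ‖mplus i - m i‖ ^ 2) := by
  set d : Fin n → E := fun i => mplus i - m i
  rw [← blockMean_fin] at hshat hshatp
  have hsplus' : splus = fun i => blockMul A s i + d i :=
    funext fun i => by rw [hsplus, add_sub_assoc]; rfl
  have hdecomp : ∀ i,
      splus i - shatp = blockMul A (fun j => s j - shat) i + (d i - blockMean d) := by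
    intro i
    rw [blockMul_sub_const hArow, hshatp, hsplus', blockMean_add, blockMean_blockMul hAcol, hshat]
    beta_reduce
    abel
  calc √(∑ i, ‖splus i - shatp‖ ^ 2)
      = √(∑ i, ‖blockMul A (fun j => s j - shat) i + (d i - blockMean d)‖ ^ 2) := by
        simp only [hdecomp]
    _ ≤ √(∑ i, ‖blockMul A (fun j => s j - shat) i‖ ^ 2) + √(∑ i, ‖d i - blockMean d‖ ^ 2) :=
        sqrt_sum_norm_add_sq_le _ _
    _ ≤ σ * √(∑ i, ‖s i - shat‖ ^ 2) + √(∑ i, ‖d i‖ ^ 2) :=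
        add_le_add (hcontr _ (hshat ▸ sum_sub_blockMean s))
          (Real.sqrt_le_sqrt (sum_norm_sub_blockMean_sq_le d))

/-- One-step contraction of the tracking error towards the network average:
with `s⁺ i = (A·s) i + m⁺ i - m i` and a doubly stochastic `A` that is
`σ`-contractive on mean-zero families,
`‖s⁺ - ŝ⁺‖₂ ≤ σ ‖s - ŝ‖₂ + ‖m⁺ - m‖₂`. -/
theorem tracking_error_one_step_contraction
    {E : Type*} [NormedAddCommGroup E] [InnerProductSpace ℝ E]
    (n : ℕ) (hn : 1 ≤ n)
    (A : Fin n → Fin n → ℝ)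
    (hA0 : ∀ i j, 0 ≤ A i j)
    (hArow : ∀ i, ∑ j, A i j = 1)
    (hAcol : ∀ j, ∑ i, A i j = 1)
    (σ : ℝ) (hσ : 0 ≤ σ)
    (hcontr : ∀ v : Fin n → E, (∑ i, v i) = 0 →
      Real.sqrt (∑ i, ‖∑ j, A i j • v j‖ ^ 2) ≤ σ * Real.sqrt (∑ i, ‖v i‖ ^ 2))
    (s m mplus splus : Fin n → E)
    (hsplus : ∀ i, splus i = (∑ j, A i j • s j) + mplus i - m i)
    (shat shatp : E)
    (hshat : shat = (n : ℝ)⁻¹ • ∑ i, s i)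
    (hshatp : shatp = (n : ℝ)⁻¹ • ∑ i, splus i) :
    Real.sqrt (∑ i, ‖splus i - shatp‖ ^ 2) ≤
      σ * Real.sqrt (∑ i, ‖s i - shat‖ ^ 2)
        + Real.sqrt (∑ i, ‖mplus i - m i‖ ^ 2) :=
  tracking_error_one_step_contraction_general n A hArow hAcol σ hcontr s m mplus splus hsplus shat
    shatp hshat hshatp
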